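/- If m₁, …, m₅ are integers, each at least 2, satisfying Σᵢ (mᵢ - 1)/mᵢ ≤ 3, then after sorting in nondecreasing order the tuple (m₁,…,m₅) is one of: (2,2,3,3,3), (2,2,2,4,4), (2,2,2,3,n) with 3 ≤ n ≤ 6, or (2,2,2,2,n) with n ≥ 2. -/

import Mathlib

/-!
Since `(m - 1) / m = 1 - 1 / m`, the hypothesis says that the reciprocals of the sorted tuple
`a ≤ b ≤ c ≤ d ≤ e` sum to at least `2`. Bounding every reciprocal by that of the smallest
remaining entry forces `a = b = 2`, leaving `1/c + 1/d + 1/e ≥ 1`, whose sorted solutions are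
the classical ones `(2, 2, n)`, `(2, 3, n ≤ 6)`, `(2, 4, 4)`, `(3, 3, 3)`.
-/

lemma Finset.sum_sub_one_div_eq_card_sub_sum_inv {ι K : Type*} [DivisionRing K] (s : Finset ι)
    {x : ι → K} (hx : ∀ i ∈ s, x i ≠ 0) : ∑ i ∈ s, (x i - 1) / x i = s.card - ∑ i ∈ s, (x i)⁻¹ := by
  rw [Finset.card_eq_sum_ones, Nat.cast_sum, ← Finset.sum_sub_distrib]
  refine Finset.sum_congr rfl fun i hi => ?_
  rw [sub_div, div_self (hx i hi), one_div, Nat.cast_one]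

section Reciprocals

variable {K : Type*} [Field K] [LinearOrder K] [IsStrictOrderedRing K]

lemma Int.cast_inv_le_inv_of_le {k x : ℤ} (hk : 0 < k) (h : k ≤ x) : (x : K)⁻¹ ≤ (k : K)⁻¹ :=
  inv_anti₀ (by exact_mod_cast hk) (by exact_mod_cast h)

lemma cases_of_half_le_inv_add_inv {d e : ℤ} (hd : 2 ≤ d) (hde : d ≤ e)
    (h : (2 : K)⁻¹ ≤ (d : K)⁻¹ + (e : K)⁻¹) :
    d = 2 ∨ (d = 3 ∧ e ≤ 6) ∨ (d = 4 ∧ e = 4) := by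
  have hd4 : d ≤ 4 := by
    by_contra! hd5
    have := Int.cast_inv_le_inv_of_le (K := K) (k := 5) (by norm_num) hd5
    have := Int.cast_inv_le_inv_of_le (K := K) (x := e) (k := 5) (by norm_num) (by omega)
    norm_num at *
    linarith
  interval_cases d
  · exact Or.inl rfl
  · refine Or.inr (Or.inl ⟨rfl, ?_⟩)
    by_contra! he7
    have := Int.cast_inv_le_inv_of_le (K := K) (k := 7) (by norm_num) he7
    norm_num at *
    linarith
  · refine Or.inr (Or.inr ⟨rfl, le_antisymm ?_ hde⟩)
    by_contra! he5
    have := Int.cast_inv_le_inv_of_le (K := K) (k := 5) (by norm_num) he5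
    norm_num at *
    linarith

lemma cases_of_one_le_inv_add_inv_add_inv {c d e : ℤ} (hc : 2 ≤ c) (hcd : c ≤ d) (hde : d ≤ e)
    (h : 1 ≤ (c : K)⁻¹ + (d : K)⁻¹ + (e : K)⁻¹) :
    (c = 2 ∧ (d = 2 ∨ (d = 3 ∧ e ≤ 6) ∨ (d = 4 ∧ e = 4))) ∨ (c = 3 ∧ d = 3 ∧ e = 3) := by
  have hc3 : c ≤ 3 := by
    by_contra! hc4
    have := Int.cast_inv_le_inv_of_le (K := K) (k := 4) (by norm_num) hc4
    have := Int.cast_inv_le_inv_of_le (K := K) (x := d) (k := 4) (by norm_num) (by omega)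
    have := Int.cast_inv_le_inv_of_le (K := K) (x := e) (k := 4) (by norm_num) (by omega)
    norm_num at *
    linarith
  interval_cases c
  · refine Or.inl ⟨rfl, cases_of_half_le_inv_add_inv (K := K) hcd hde ?_⟩
    norm_num at h
    linarith
  · have hd3 : d ≤ 3 := by
      by_contra! hd4
      have := Int.cast_inv_le_inv_of_le (K := K) (k := 4) (by norm_num) hd4
      have := Int.cast_inv_le_inv_of_le (K := K) (x := e) (k := 4) (by norm_num) (by omega)
      norm_num at *
      linarith
    obtain rfl : d = 3 := le_antisymm hd3 hcd
    have he3 : e ≤ 3 := by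
      by_contra! he4
      have := Int.cast_inv_le_inv_of_le (K := K) (k := 4) (by norm_num) he4
      norm_num at *
      linarith
    exact Or.inr ⟨rfl, rfl, le_antisymm he3 hde⟩

lemma eq_two_of_two_le_sum_inv {a b c d e : ℤ} (ha : 2 ≤ a) (hab : a ≤ b) (hbc : b ≤ c)
    (hcd : c ≤ d) (hde : d ≤ e)
    (h : 2 ≤ (a : K)⁻¹ + (b : K)⁻¹ + (c : K)⁻¹ + (d : K)⁻¹ + (e : K)⁻¹) :
    a = 2 ∧ b = 2 ∧ 1 ≤ (c : K)⁻¹ + (d : K)⁻¹ + (e : K)⁻¹ := by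
  have hb2 : b ≤ 2 := by
    by_contra! hb3
    have := Int.cast_inv_le_inv_of_le (K := K) (k := 2) (by norm_num) ha
    have := Int.cast_inv_le_inv_of_le (K := K) (k := 3) (by norm_num) hb3
    have := Int.cast_inv_le_inv_of_le (K := K) (x := c) (k := 3) (by norm_num) (by omega)
    have := Int.cast_inv_le_inv_of_le (K := K) (x := d) (k := 3) (by norm_num) (by omega)
    have := Int.cast_inv_le_inv_of_le (K := K) (x := e) (k := 3) (by norm_num) (by omega)
    norm_num at *
    linarith
  obtain rfl : a = 2 := le_antisymm (hab.trans hb2) ha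
  obtain rfl : b = 2 := le_antisymm hb2 hab
  refine ⟨rfl, rfl, ?_⟩
  norm_num at h
  linarith

end Reciprocals

/-- Classification of five integers `m i ≥ 2` with `Σ (m i - 1)/(m i) ≤ 3`:
after sorting, the tuple is (2,2,3,3,3), (2,2,2,4,4), (2,2,2,3,n) with 3 ≤ n ≤ 6,
or (2,2,2,2,n) with n ≥ 2. -/
theorem stmt0 (m : Fin 5 → ℤ) (h2 : ∀ i, 2 ≤ m i)
    (hsum : ∑ i, ((m i : ℚ) - 1) / (m i) ≤ 3) :
    ∃ σ : Equiv.Perm (Fin 5), Monotone (m ∘ σ) ∧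
      (m ∘ σ = ![2, 2, 3, 3, 3] ∨
       m ∘ σ = ![2, 2, 2, 4, 4] ∨
       (∃ n : ℤ, 3 ≤ n ∧ n ≤ 6 ∧ m ∘ σ = ![2, 2, 2, 3, n]) ∨
       (∃ n : ℤ, 2 ≤ n ∧ m ∘ σ = ![2, 2, 2, 2, n])) := by
  set σ := Tuple.sort m
  have hmono : Monotone (m ∘ σ) := Tuple.monotone_sort m
  have hinv : 2 ≤ ∑ i, ((m (σ i) : ℚ))⁻¹ := by
    rw [Finset.sum_sub_one_div_eq_card_sub_sum_inv _ fun i _ => by have := h2 i; positivity,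
      ← Equiv.sum_comp σ] at hsum
    norm_num at hsum
    linarith
  have heta : m ∘ σ = ![m (σ 0), m (σ 1), m (σ 2), m (σ 3), m (σ 4)] := by
    ext i; fin_cases i <;> rfl
  have hle {i j : Fin 5} (hij : i ≤ j) : m (σ i) ≤ m (σ j) := hmono hij
  rw [Fin.sum_univ_five] at hinv
  obtain ⟨ha, hb, htail⟩ := eq_two_of_two_le_sum_inv (h2 _) (hle (by decide))
    (hle (by decide)) (hle (by decide)) (hle (by decide)) hinv
  refine ⟨σ, hmono, ?_⟩
  rw [heta, ha, hb]
  rcases cases_of_one_le_inv_add_inv_add_inv (h2 _) (hle (by decide)) (hle (by decide)) htail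
    with ⟨hc, hd | ⟨hd, he⟩ | ⟨hd, he⟩⟩ | ⟨hc, hd, he⟩
  · exact Or.inr <| Or.inr <| Or.inr ⟨m (σ 4), h2 _, by rw [hc, hd]⟩
  · exact Or.inr <| Or.inr <| Or.inl ⟨m (σ 4), hd ▸ hle (by decide), he, by rw [hc, hd]⟩
  · exact Or.inr <| Or.inl <| by rw [hc, hd, he]
  · exact Or.inl <| by rw [hc, hd, he]
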